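/- arXiv:1911.10972 — 2 statements merged into one kernel-verified Lean document; each statement's English description precedes it below -/
import Mathlib

section
/- Let T > 0, σ > 0, and let a, b, M be real numbers with M > a and M > b. Then the conditional density of the location of the maximum integrates to one: ∫₀^T (1/(√(2π)·σ)) · ((M-a)(M-b)/(2M-a-b)) · (T/(θ(T-θ)))^{3/2} · exp( (1/σ²)·( (b-a)²/(2T) + 2(M-a)(M-b)/T − (M-a)²/(2θ) − (M-b)²/(2(T-θ)) ) ) dθ = 1. -/
/-!
Put `α = (M - a) / σ`, `β = (M - b) / σ`, `u(θ) = (α (T - θ) - β θ) / √(T θ (T - θ))`, and let `v`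
be `u` with `β` replaced by `-β`. The exponent of the density is `-u² / 2`, and `-v² / 2` differs
from it by the constant `-2αβ / T`. Hence, for `Φ` a primitive of `exp (-x² / 2)`, the function
`(Φ (-u) + (β - α) / (α + β) · exp (2αβ / T) · Φ (-v)) / √(2π)` is a primitive of the density on
`(0, T)`. As `θ → 0⁺` both `u` and `v` tend to `+∞`, while as `θ → T⁻` we have `u → -∞` and
`v → +∞`; since `Φ (±∞) = ±√(2π) / 2`, the primitive increases by exactly `1` across `(0, T)`.
The density is nonnegative, so it is integrable and the improper fundamental theorem of calculus
applies.
-/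

open Real MeasureTheory Filter Set Topology Function

theorem integral_eq_sub_of_hasDerivAt_of_tendsto_of_nonneg {f f' : ℝ → ℝ} {a b fa fb : ℝ}
    (hab : a < b) (hderiv : ∀ x ∈ Ioo a b, HasDerivAt f (f' x) x)
    (hpos : ∀ x ∈ Ioo a b, 0 ≤ f' x)
    (ha : Tendsto f (𝓝[>] a) (𝓝 fa)) (hb : Tendsto f (𝓝[<] b) (𝓝 fb)) :
    ∫ x in a..b, f' x = fb - fa := by
  set F := update (update f a fa) b fb
  have hF : EqOn F f (Ioo a b) := fun x hx => by
    simp only [F, update_of_ne hx.2.ne, update_of_ne hx.1.ne']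
  have hcont : ContinuousOn F (Icc a b) := by
    rw [continuousOn_update_iff, continuousOn_update_iff, Icc_sdiff_right, Ico_sdiff_left]
    refine ⟨⟨fun z hz => (hderiv z hz).continuousAt.continuousWithinAt, fun _ =>
      ha.mono_left (nhdsWithin_mono _ Ioo_subset_Ioi_self)⟩, fun _ => ?_⟩
    refine (hb.congr' ?_).mono_left (nhdsWithin_mono _ Ico_subset_Iio_self)
    filter_upwards [Ioo_mem_nhdsLT hab] with _ hz using (update_of_ne hz.1.ne' _ _).symm
  have hint : IntervalIntegrable f' volume a b :=
    (intervalIntegrable_iff_integrableOn_Ioc_of_le hab.le).2 <|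
      intervalIntegral.integrableOn_deriv_of_nonneg hcont
        (fun x hx => (hderiv x hx).congr_of_eventuallyEq
          (eventuallyEq_of_mem (Ioo_mem_nhds hx.1 hx.2) hF)) hpos
  exact intervalIntegral.integral_eq_sub_of_hasDerivAt_of_tendsto hab hderiv hint ha hb

noncomputable def gaussianPrimitive (x : ℝ) : ℝ := ∫ t in (0 : ℝ)..x, exp (-t ^ 2 / 2)

theorem hasDerivAt_gaussianPrimitive (x : ℝ) :
    HasDerivAt gaussianPrimitive (exp (-x ^ 2 / 2)) x :=
  (Continuous.integral_hasStrictDerivAt (by fun_prop) 0 x).hasDerivAt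

theorem gaussianPrimitive_neg (x : ℝ) : gaussianPrimitive (-x) = -gaussianPrimitive x := by
  have h := intervalIntegral.integral_comp_neg (a := 0) (b := x) fun t => exp (-t ^ 2 / 2)
  simp only [neg_sq, neg_zero] at h
  rw [gaussianPrimitive, gaussianPrimitive, h, ← intervalIntegral.integral_symm]

theorem tendsto_gaussianPrimitive_atTop :
    Tendsto gaussianPrimitive atTop (𝓝 (√(2 * π) / 2)) := by
  have hg : (fun t : ℝ => exp (-t ^ 2 / 2)) = fun t => exp (-(1 / 2) * t ^ 2) := by
    ext t; ring_nf
  have hI : ∫ t in Ioi (0 : ℝ), exp (-t ^ 2 / 2) = √(2 * π) / 2 := by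
    rw [hg, integral_gaussian_Ioi]; norm_num [div_div_eq_mul_div, mul_comm]
  rw [← hI]
  exact intervalIntegral_tendsto_integral_Ioi 0
    (hg ▸ integrable_exp_neg_mul_sq (by norm_num : (0 : ℝ) < 1 / 2)).integrableOn tendsto_id

theorem tendsto_gaussianPrimitive_atBot :
    Tendsto gaussianPrimitive atBot (𝓝 (-(√(2 * π) / 2))) := by
  have h : gaussianPrimitive = fun x => -gaussianPrimitive (-x) := by
    ext x; rw [gaussianPrimitive_neg, neg_neg]
  rw [h]
  exact (tendsto_gaussianPrimitive_atTop.comp tendsto_neg_atBot_atTop).neg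

theorem tendsto_inv_sqrt_of_tendsto_zero {ι : Type*} {l : Filter ι} {g : ι → ℝ}
    (hg : Tendsto g l (𝓝 0)) (hpos : ∀ᶠ x in l, 0 < g x) :
    Tendsto (fun x => (√(g x))⁻¹) l atTop := by
  refine tendsto_inv_nhdsGT_zero.comp (tendsto_nhdsWithin_iff.2 ⟨?_, ?_⟩)
  · exact (continuous_sqrt.tendsto' 0 0 sqrt_zero).comp hg
  · filter_upwards [hpos] with x hx using sqrt_pos.2 hx

section BridgeZ

variable {T p q θ : ℝ}

noncomputable def bridgeZ (T p q θ : ℝ) : ℝ := (p * (T - θ) - q * θ) / √(T * θ * (T - θ))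

theorem bridgeZ_sq (hθ : 0 < θ) (hθT : θ < T) :
    bridgeZ T p q θ ^ 2 = p ^ 2 / θ + q ^ 2 / (T - θ) - (p + q) ^ 2 / T := by
  have hTθ : 0 < T - θ := sub_pos.2 hθT
  have hT : 0 < T := hθ.trans hθT
  rw [bridgeZ, div_pow, sq_sqrt (by positivity)]
  field_simp
  ring

theorem rpow_three_halves_eq_div_sqrt_pow (hθ : 0 < θ) (hθT : θ < T) :
    (T / (θ * (T - θ))) ^ ((3 : ℝ) / 2) = T ^ 3 / √(T * θ * (T - θ)) ^ 3 := by
  have hTθ : 0 < T - θ := sub_pos.2 hθT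
  have hT : 0 < T := hθ.trans hθT
  rw [show T / (θ * (T - θ)) = T ^ 2 / √(T * θ * (T - θ)) ^ 2 by
      rw [sq_sqrt (by positivity)]; field_simp,
    ← div_pow, ← rpow_natCast, ← rpow_mul (by positivity)]
  norm_num [div_pow]

theorem hasDerivAt_bridgeZ (hθ : 0 < θ) (hθT : θ < T) :
    HasDerivAt (bridgeZ T p q)
      (-(p * (T - θ) + q * θ) / (2 * T) * (T / (θ * (T - θ))) ^ ((3 : ℝ) / 2)) θ := by
  have hTθ : 0 < T - θ := sub_pos.2 hθT
  have hT : 0 < T := hθ.trans hθT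
  have hP : 0 < T * θ * (T - θ) := by positivity
  have hnum : HasDerivAt (fun x => p * (T - x) - q * x) (-p - q) θ :=
    (((hasDerivAt_id θ).const_sub T).const_mul p).sub ((hasDerivAt_id θ).const_mul q)
      |>.congr_deriv (by simp)
  have hsqrt : HasDerivAt (fun x => √(T * x * (T - x)))
      (T * (T - 2 * θ) / (2 * √(T * θ * (T - θ)))) θ :=
    (((hasDerivAt_id θ).const_mul T).mul ((hasDerivAt_id θ).const_sub T)).sqrt hP.ne'
      |>.congr_deriv (by simp; ring)
  refine (hnum.div hsqrt (sqrt_pos.2 hP).ne').congr_deriv ?_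
  rw [rpow_three_halves_eq_div_sqrt_pow hθ hθT]
  have hs := sq_sqrt hP.le
  have hs0 := (sqrt_pos.2 hP).ne'
  generalize √(T * θ * (T - θ)) = s at hs hs0 ⊢
  field_simp
  linear_combination -2 * (p + q) * hs

theorem tendsto_inv_sqrt_mul_mul_sub_nhdsGT_zero (hT : 0 < T) :
    Tendsto (fun θ => (√(T * θ * (T - θ)))⁻¹) (𝓝[>] 0) atTop := by
  refine tendsto_inv_sqrt_of_tendsto_zero ?_ ?_
  · exact tendsto_nhdsWithin_of_tendsto_nhds (Continuous.tendsto' (by fun_prop) _ _ (by ring))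
  · filter_upwards [Ioo_mem_nhdsGT hT] with θ hθ
    exact mul_pos (mul_pos hT hθ.1) (sub_pos.2 hθ.2)

theorem tendsto_inv_sqrt_mul_mul_sub_nhdsLT (hT : 0 < T) :
    Tendsto (fun θ => (√(T * θ * (T - θ)))⁻¹) (𝓝[<] T) atTop := by
  refine tendsto_inv_sqrt_of_tendsto_zero ?_ ?_
  · exact tendsto_nhdsWithin_of_tendsto_nhds (Continuous.tendsto' (by fun_prop) _ _ (by ring))
  · filter_upwards [Ioo_mem_nhdsLT hT] with θ hθ
    exact mul_pos (mul_pos hT hθ.1) (sub_pos.2 hθ.2)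

theorem tendsto_bridgeZ_nhdsGT_zero (hT : 0 < T) (hp : 0 < p) :
    Tendsto (bridgeZ T p q) (𝓝[>] 0) atTop := by
  have hnum : Tendsto (fun θ => p * (T - θ) - q * θ) (𝓝[>] 0) (𝓝 (p * T)) :=
    tendsto_nhdsWithin_of_tendsto_nhds (Continuous.tendsto' (by fun_prop) _ _ (by ring))
  exact hnum.pos_mul_atTop (mul_pos hp hT) (tendsto_inv_sqrt_mul_mul_sub_nhdsGT_zero hT)

theorem tendsto_bridgeZ_nhdsLT_atBot (hT : 0 < T) (hq : 0 < q) :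
    Tendsto (bridgeZ T p q) (𝓝[<] T) atBot := by
  have hnum : Tendsto (fun θ => p * (T - θ) - q * θ) (𝓝[<] T) (𝓝 (-(q * T))) :=
    tendsto_nhdsWithin_of_tendsto_nhds (Continuous.tendsto' (by fun_prop) _ _ (by ring))
  exact hnum.neg_mul_atTop (neg_neg_of_pos (mul_pos hq hT)) (tendsto_inv_sqrt_mul_mul_sub_nhdsLT hT)

theorem tendsto_bridgeZ_nhdsLT_atTop (hT : 0 < T) (hq : q < 0) :
    Tendsto (bridgeZ T p q) (𝓝[<] T) atTop := by
  have hnum : Tendsto (fun θ => p * (T - θ) - q * θ) (𝓝[<] T) (𝓝 (-(q * T))) :=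
    tendsto_nhdsWithin_of_tendsto_nhds (Continuous.tendsto' (by fun_prop) _ _ (by ring))
  exact hnum.pos_mul_atTop (by nlinarith) (tendsto_inv_sqrt_mul_mul_sub_nhdsLT hT)

end BridgeZ

section ArgmaxDensity

variable {T α β θ : ℝ}

noncomputable def argmaxDensity (T α β θ : ℝ) : ℝ :=
  α * β / (√(2 * π) * (α + β)) * (T / (θ * (T - θ))) ^ ((3 : ℝ) / 2) *
    exp ((α + β) ^ 2 / (2 * T) - α ^ 2 / (2 * θ) - β ^ 2 / (2 * (T - θ)))

noncomputable def argmaxPrimitive (T α β θ : ℝ) : ℝ :=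
  (gaussianPrimitive (-bridgeZ T α β θ) +
    (β - α) / (α + β) * exp (2 * α * β / T) * gaussianPrimitive (-bridgeZ T α (-β) θ)) /
      √(2 * π)

theorem argmaxDensity_nonneg (hα : 0 ≤ α) (hβ : 0 ≤ β) (hθ : 0 < θ) (hθT : θ < T) :
    0 ≤ argmaxDensity T α β θ := by
  have hTθ : 0 < T - θ := sub_pos.2 hθT
  have hT : 0 < T := hθ.trans hθT
  unfold argmaxDensity
  positivity

theorem hasDerivAt_argmaxPrimitive (hαβ : α + β ≠ 0) (hθ : 0 < θ) (hθT : θ < T) :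
    HasDerivAt (argmaxPrimitive T α β) (argmaxDensity T α β θ) θ := by
  have hT : T ≠ 0 := (hθ.trans hθT).ne'
  have hTθ : T - θ ≠ 0 := (sub_pos.2 hθT).ne'
  have hu : -(-bridgeZ T α β θ) ^ 2 / 2 =
      (α + β) ^ 2 / (2 * T) - α ^ 2 / (2 * θ) - β ^ 2 / (2 * (T - θ)) := by
    rw [neg_sq, bridgeZ_sq hθ hθT]; field_simp; ring
  have hv : -(-bridgeZ T α (-β) θ) ^ 2 / 2 =
      (α + β) ^ 2 / (2 * T) - α ^ 2 / (2 * θ) - β ^ 2 / (2 * (T - θ)) - 2 * α * β / T := by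
    rw [neg_sq, bridgeZ_sq hθ hθT]; field_simp; ring
  have hderiv := (((hasDerivAt_gaussianPrimitive _).comp θ
    (hasDerivAt_bridgeZ (p := α) (q := β) hθ hθT).neg).add
    (((hasDerivAt_gaussianPrimitive _).comp θ
      (hasDerivAt_bridgeZ (p := α) (q := -β) hθ hθT).neg).const_mul
      ((β - α) / (α + β) * exp (2 * α * β / T)))).div_const (√(2 * π))
  refine hderiv.congr_deriv ?_
  rw [Pi.neg_apply, Pi.neg_apply, hu, hv, exp_sub _ (2 * α * β / T), argmaxDensity]
  have hG := (exp_pos (2 * α * β / T)).ne'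
  generalize exp (2 * α * β / T) = G at hG ⊢
  generalize exp ((α + β) ^ 2 / (2 * T) - α ^ 2 / (2 * θ) - β ^ 2 / (2 * (T - θ))) = E
  generalize (T / (θ * (T - θ))) ^ ((3 : ℝ) / 2) = R
  field_simp
  ring

theorem tendsto_argmaxPrimitive_nhdsGT_zero (hT : 0 < T) (hα : 0 < α) :
    Tendsto (argmaxPrimitive T α β) (𝓝[>] 0)
      (𝓝 (-(1 + (β - α) / (α + β) * exp (2 * α * β / T)) / 2)) := by
  have h : Tendsto (argmaxPrimitive T α β) _ _ := ((tendsto_gaussianPrimitive_atBot.comp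
    (tendsto_neg_atTop_atBot.comp (tendsto_bridgeZ_nhdsGT_zero (q := β) hT hα))).add
    ((tendsto_gaussianPrimitive_atBot.comp
      (tendsto_neg_atTop_atBot.comp (tendsto_bridgeZ_nhdsGT_zero (q := -β) hT hα))).const_mul
      ((β - α) / (α + β) * exp (2 * α * β / T)))).div_const (√(2 * π))
  convert h using 2
  field_simp
  ring

theorem tendsto_argmaxPrimitive_nhdsLT (hT : 0 < T) (hβ : 0 < β) :
    Tendsto (argmaxPrimitive T α β) (𝓝[<] T)
      (𝓝 ((1 - (β - α) / (α + β) * exp (2 * α * β / T)) / 2)) := by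
  have h : Tendsto (argmaxPrimitive T α β) _ _ := ((tendsto_gaussianPrimitive_atTop.comp
    (tendsto_neg_atBot_atTop.comp (tendsto_bridgeZ_nhdsLT_atBot (p := α) hT hβ))).add
    ((tendsto_gaussianPrimitive_atBot.comp
      (tendsto_neg_atTop_atBot.comp
        (tendsto_bridgeZ_nhdsLT_atTop (p := α) hT (neg_neg_of_pos hβ)))).const_mul
      ((β - α) / (α + β) * exp (2 * α * β / T)))).div_const (√(2 * π))
  convert h using 2
  field_simp
  ring

theorem integral_argmaxDensity (hT : 0 < T) (hα : 0 < α) (hβ : 0 < β) :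
    ∫ θ in (0 : ℝ)..T, argmaxDensity T α β θ = 1 := by
  rw [integral_eq_sub_of_hasDerivAt_of_tendsto_of_nonneg hT
    (fun θ hθ => hasDerivAt_argmaxPrimitive (add_pos hα hβ).ne' hθ.1 hθ.2)
    (fun θ hθ => argmaxDensity_nonneg hα.le hβ.le hθ.1 hθ.2)
    (tendsto_argmaxPrimitive_nhdsGT_zero hT hα) (tendsto_argmaxPrimitive_nhdsLT hT hβ)]
  ring

end ArgmaxDensity

/-- The conditional density of the location of the maximum of a Brownian bridge on
[0,T] from a to b with volatility σ, given that the maximum equals M, integrates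
to one over (0,T). -/
theorem brownian_bridge_argmax_density_integrates_to_one
    (T σ a b M : ℝ) (hT : 0 < T) (hσ : 0 < σ) (hMa : a < M) (hMb : b < M) :
    ∫ θ in (0 : ℝ)..T,
      1 / (Real.sqrt (2 * π) * σ) * ((M - a) * (M - b) / (2 * M - a - b)) *
        (T / (θ * (T - θ))) ^ ((3 : ℝ) / 2) *
        Real.exp ((1 / σ ^ 2) * ((b - a) ^ 2 / (2 * T) + 2 * (M - a) * (M - b) / T
          - (M - a) ^ 2 / (2 * θ) - (M - b) ^ 2 / (2 * (T - θ)))) = 1 := by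
  have hα : 0 < (M - a) / σ := div_pos (sub_pos.2 hMa) hσ
  have hβ : 0 < (M - b) / σ := div_pos (sub_pos.2 hMb) hσ
  refine (intervalIntegral.integral_congr fun θ _ => ?_).trans (integral_argmaxDensity hT hα hβ)
  have hM : 2 * M - a - b ≠ 0 := by linarith
  rw [argmaxDensity, ← add_div, show M - a + (M - b) = 2 * M - a - b by ring]
  congr 2
  · field_simp
  · field_simp
    ring
end

section
/- Let T > 0 and let a, b, m be real numbers with m < a and m < b. Then ∫₀^T ((a-m)(b-m)·√(2T) / √(π·θ³·(T-θ)³)) · exp( (a-b)²/(2T) − (a-m)²/(2θ) − (b-m)²/(2(T-θ)) ) dθ = (2/T)·(a+b-2m)·exp(−2(a-m)(b-m)/T). -/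
/-!
With `α = a - m`, `β = b - m` and `g x = ∫₀ˣ exp (-t² / (2T)) dt`, put
`U = (α (T - θ) - β θ) / √(θ (T - θ))` and `W = (α (T - θ) + β θ) / √(θ (T - θ))`.
Then `W² / (2T)` is minus the exponent of the integrand, `U² = W² - 4αβ`, and
`U' = -T W / (2θ(T - θ))`, `W' = -T U / (2θ(T - θ))`; hence the integrand is the derivative of
`-(2 / (T √(2πT))) ((α + β) e^{-2αβ/T} g(U) + (β - α) g(W))`.
As `θ → 0⁺` both `U` and `W` tend to `+∞`, while as `θ → T⁻` we have `U → -∞` and `W → +∞`,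
so the fundamental theorem of calculus gives the value. The integrand is nonnegative, so its
integrability comes for free from the existence of these limits.
-/

open Real MeasureTheory Filter Set Topology

theorem intervalIntegrable_deriv_of_nonneg_of_tendsto {f f' : ℝ → ℝ} {a b fa fb : ℝ}
    (hab : a < b) (hderiv : ∀ x ∈ Ioo a b, HasDerivAt f (f' x) x)
    (hpos : ∀ x ∈ Ioo a b, 0 ≤ f' x)
    (ha : Tendsto f (𝓝[>] a) (𝓝 fa)) (hb : Tendsto f (𝓝[<] b) (𝓝 fb)) :
    IntervalIntegrable f' volume a b := by
  classical
  set F := Function.update (Function.update f a fa) b fb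
  have hFf : EqOn F f (Ioo a b) := fun x hx => by
    simp only [F, Function.update_of_ne hx.2.ne, Function.update_of_ne hx.1.ne']
  have hFderiv : ∀ x ∈ Ioo a b, HasDerivAt F (f' x) x := fun x hx =>
    (hderiv x hx).congr_of_eventuallyEq (eventuallyEq_of_mem (Ioo_mem_nhds hx.1 hx.2) hFf)
  have hFcont : ContinuousOn F (Icc a b) := by
    rw [continuousOn_update_iff, continuousOn_update_iff, Icc_sdiff_right, Ico_sdiff_left]
    refine ⟨⟨fun x hx => (hderiv x hx).continuousAt.continuousWithinAt,
      fun _ => ha.mono_left (nhdsWithin_mono _ Ioo_subset_Ioi_self)⟩, fun _ => ?_⟩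
    refine (hb.congr' ?_).mono_left (nhdsWithin_mono _ Ico_subset_Iio_self)
    filter_upwards [Ioo_mem_nhdsLT hab] with x hx using (Function.update_of_ne hx.1.ne' _ _).symm
  refine intervalIntegral.intervalIntegrable_deriv_of_nonneg (g := F) ?_ ?_ ?_
  · rwa [uIcc_of_le hab.le]
  · simpa [hab.le] using hFderiv
  · simpa [hab.le] using hpos

noncomputable def gaussPrimitive (c x : ℝ) : ℝ := ∫ t in (0 : ℝ)..x, exp (-c * t ^ 2)

theorem hasDerivAt_gaussPrimitive (c x : ℝ) :
    HasDerivAt (gaussPrimitive c) (exp (-c * x ^ 2)) x := by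
  have hcont : Continuous fun t : ℝ => exp (-c * t ^ 2) := by fun_prop
  exact intervalIntegral.integral_hasDerivAt_right (hcont.intervalIntegrable 0 x)
    hcont.stronglyMeasurable.stronglyMeasurableAtFilter hcont.continuousAt

theorem tendsto_gaussPrimitive_atTop {c : ℝ} (hc : 0 < c) :
    Tendsto (gaussPrimitive c) atTop (𝓝 (√(π / c) / 2)) := by
  rw [← integral_gaussian_Ioi]
  exact intervalIntegral_tendsto_integral_Ioi 0 (integrable_exp_neg_mul_sq hc).integrableOn
    tendsto_id

theorem gaussPrimitive_neg (c x : ℝ) : gaussPrimitive c (-x) = -gaussPrimitive c x := by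
  unfold gaussPrimitive
  have := intervalIntegral.integral_comp_neg (a := 0) (b := x) (fun t => exp (-c * t ^ 2))
  simp only [neg_sq, neg_zero] at this
  rw [this, intervalIntegral.integral_symm]

theorem tendsto_gaussPrimitive_atBot {c : ℝ} (hc : 0 < c) :
    Tendsto (gaussPrimitive c) atBot (𝓝 (-(√(π / c) / 2))) := by
  have h := ((tendsto_gaussPrimitive_atTop hc).comp tendsto_neg_atBot_atTop).neg
  refine h.congr fun x => ?_
  simp [gaussPrimitive_neg]

noncomputable def bridgeRatio (T p q θ : ℝ) : ℝ := (p * (T - θ) + q * θ) / √(θ * (T - θ))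

section bridgeRatio

variable {T θ : ℝ}

theorem sq_sqrt_mul_sub (hθ : θ ∈ Ioo 0 T) : √(θ * (T - θ)) ^ 2 = θ * (T - θ) :=
  sq_sqrt (mul_pos hθ.1 (sub_pos.2 hθ.2)).le

theorem sqrt_mul_sub_pos (hθ : θ ∈ Ioo 0 T) : 0 < √(θ * (T - θ)) :=
  sqrt_pos.2 (mul_pos hθ.1 (sub_pos.2 hθ.2))

theorem hasDerivAt_bridgeRatio (p q : ℝ) (hθ : θ ∈ Ioo 0 T) :
    HasDerivAt (bridgeRatio T p q)
      (-(T * bridgeRatio T p (-q) θ) / (2 * (θ * (T - θ)))) θ := by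
  have hs := sqrt_mul_sub_pos hθ
  have hs2 := sq_sqrt_mul_sub hθ
  have hθ0 : 0 < θ := hθ.1
  have hTθ : 0 < T - θ := sub_pos.2 hθ.2
  have hnum : HasDerivAt (fun x => p * (T - x) + q * x) (q - p) θ :=
    ((((hasDerivAt_id' θ).const_sub T).const_mul p).add
      ((hasDerivAt_id' θ).const_mul q)).congr_deriv (by ring)
  have hprod : HasDerivAt (fun x => x * (T - x)) (T - 2 * θ) θ :=
    ((hasDerivAt_id' θ).mul ((hasDerivAt_id' θ).const_sub T)).congr_deriv (by ring)
  refine (hnum.div (hprod.sqrt (mul_pos hθ0 hTθ).ne') hs.ne').congr_deriv ?_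
  simp only [bridgeRatio]
  field_simp
  rw [hs2]
  field_simp
  ring

theorem bridgeRatio_sq (p q : ℝ) (hθ : θ ∈ Ioo 0 T) :
    bridgeRatio T p q θ ^ 2 = (p * (T - θ) + q * θ) ^ 2 / (θ * (T - θ)) := by
  rw [bridgeRatio, div_pow, sq_sqrt_mul_sub hθ]

theorem add_mul_bridgeRatio_add_sub_mul_bridgeRatio_neg (α β : ℝ) :
    (α + β) * bridgeRatio T α β θ + (β - α) * bridgeRatio T α (-β) θ =
      2 * α * β * T / √(θ * (T - θ)) := by
  simp only [bridgeRatio]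
  ring

theorem tendsto_inv_sqrt_mul_sub {x₀ : ℝ} (hx₀ : x₀ * (T - x₀) = 0) :
    Tendsto (fun θ => (√(θ * (T - θ)))⁻¹) (𝓝[Ioo 0 T] x₀) atTop := by
  refine tendsto_inv_nhdsGT_zero.comp (tendsto_nhdsWithin_iff.2 ⟨?_, ?_⟩)
  · have : Continuous fun θ : ℝ => √(θ * (T - θ)) := by fun_prop
    simpa [hx₀] using (this.continuousWithinAt (s := Ioo 0 T) (x := x₀)).tendsto
  · exact eventually_nhdsWithin_of_forall fun θ hθ => sqrt_mul_sub_pos hθ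

theorem tendsto_bridgeRatio_atTop {p q x₀ : ℝ} (hx₀ : x₀ * (T - x₀) = 0)
    (hpos : 0 < p * (T - x₀) + q * x₀) :
    Tendsto (bridgeRatio T p q) (𝓝[Ioo 0 T] x₀) atTop := by
  have hnum : Continuous fun θ : ℝ => p * (T - θ) + q * θ := by fun_prop
  exact (hnum.continuousWithinAt.tendsto).pos_mul_atTop hpos (tendsto_inv_sqrt_mul_sub hx₀)

theorem tendsto_bridgeRatio_atBot {p q x₀ : ℝ} (hx₀ : x₀ * (T - x₀) = 0)
    (hneg : p * (T - x₀) + q * x₀ < 0) :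
    Tendsto (bridgeRatio T p q) (𝓝[Ioo 0 T] x₀) atBot := by
  have hnum : Continuous fun θ : ℝ => p * (T - θ) + q * θ := by fun_prop
  exact (hnum.continuousWithinAt.tendsto).neg_mul_atTop hneg (tendsto_inv_sqrt_mul_sub hx₀)

end bridgeRatio

noncomputable def bridgeMinDensity (T α β θ : ℝ) : ℝ :=
  α * β * √(2 * T) / √(π * θ ^ 3 * (T - θ) ^ 3) *
    exp ((α - β) ^ 2 / (2 * T) - α ^ 2 / (2 * θ) - β ^ 2 / (2 * (T - θ)))

noncomputable def bridgeMinDensityPrimitive (T α β θ : ℝ) : ℝ :=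
  -(2 / (T * √(2 * π * T))) *
    ((α + β) * exp (-2 * α * β / T) * gaussPrimitive (2 * T)⁻¹ (bridgeRatio T α (-β) θ) +
      (β - α) * gaussPrimitive (2 * T)⁻¹ (bridgeRatio T α β θ))

section bridgeMinDensity

variable {T θ : ℝ}

theorem neg_mul_bridgeRatio_sq (α β : ℝ) (hθ : θ ∈ Ioo 0 T) :
    -(2 * T)⁻¹ * bridgeRatio T α β θ ^ 2 =
      (α - β) ^ 2 / (2 * T) - α ^ 2 / (2 * θ) - β ^ 2 / (2 * (T - θ)) := by
  have hθ0 : θ ≠ 0 := hθ.1.ne'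
  have hTθ : T - θ ≠ 0 := (sub_pos.2 hθ.2).ne'
  have hT : T ≠ 0 := (hθ.1.trans hθ.2).ne'
  rw [bridgeRatio_sq α β hθ]
  field_simp
  ring

theorem neg_mul_bridgeRatio_neg_sq (α β : ℝ) (hθ : θ ∈ Ioo 0 T) :
    -(2 * T)⁻¹ * bridgeRatio T α (-β) θ ^ 2 =
      (α - β) ^ 2 / (2 * T) - α ^ 2 / (2 * θ) - β ^ 2 / (2 * (T - θ)) + 2 * α * β / T := by
  have hθ0 : θ ≠ 0 := hθ.1.ne'
  have hTθ : T - θ ≠ 0 := (sub_pos.2 hθ.2).ne'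
  have hT : T ≠ 0 := (hθ.1.trans hθ.2).ne'
  rw [bridgeRatio_sq α (-β) hθ]
  field_simp
  ring

theorem hasDerivAt_bridgeMinDensityPrimitive (α β : ℝ) (hθ : θ ∈ Ioo 0 T) :
    HasDerivAt (bridgeMinDensityPrimitive T α β) (bridgeMinDensity T α β θ) θ := by
  have hU := (hasDerivAt_gaussPrimitive (2 * T)⁻¹ _).comp θ (hasDerivAt_bridgeRatio α (-β) hθ)
  have hW := (hasDerivAt_gaussPrimitive (2 * T)⁻¹ _).comp θ (hasDerivAt_bridgeRatio α β hθ)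
  refine (((hU.const_mul ((α + β) * exp (-2 * α * β / T))).add
    (hW.const_mul (β - α))).const_mul _).congr_deriv ?_
  rw [neg_mul_bridgeRatio_sq α β hθ, neg_mul_bridgeRatio_neg_sq α β hθ, neg_neg, bridgeMinDensity]
  set E := (α - β) ^ 2 / (2 * T) - α ^ 2 / (2 * θ) - β ^ 2 / (2 * (T - θ))
  have hθ0 := hθ.1
  have hTθ : 0 < T - θ := sub_pos.2 hθ.2
  have hT : 0 < T := hθ.1.trans hθ.2
  have hexp : exp (-2 * α * β / T) * exp (E + 2 * α * β / T) = exp E := by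
    rw [← exp_add]; ring_nf
  have hsum := add_mul_bridgeRatio_add_sub_mul_bridgeRatio_neg α β (T := T) (θ := θ)
  have hden : √(π * θ ^ 3 * (T - θ) ^ 3) = √π * √(θ * (T - θ)) * (θ * (T - θ)) := by
    rw [show π * θ ^ 3 * (T - θ) ^ 3 = π * (θ * (T - θ)) * (θ * (T - θ)) ^ 2 by ring,
      sqrt_mul (by positivity), sqrt_mul pi_pos.le, sqrt_sq (by positivity)]
  have hconst : √(2 * π * T) = √(2 * T) * √π := by
    rw [← sqrt_mul (by positivity)]; ring_nf
  have h2T : √(2 * T) ^ 2 = 2 * T := sq_sqrt (by positivity)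
  calc _ = 2 / (T * √(2 * π * T)) * (T * exp E / (2 * (θ * (T - θ)))) *
        ((α + β) * bridgeRatio T α β θ + (β - α) * bridgeRatio T α (-β) θ) := by
        rw [← hexp]; ring
    _ = _ := by
      rw [hsum, hden, hconst]
      have hs := sqrt_mul_sub_pos hθ
      field_simp
      rw [h2T]

theorem bridgeMinDensity_nonneg {α β : ℝ} (hα : 0 ≤ α) (hβ : 0 ≤ β) :
    0 ≤ bridgeMinDensity T α β θ := by
  unfold bridgeMinDensity; positivity

theorem tendsto_bridgeMinDensityPrimitive_nhdsGT_zero {α β : ℝ} (hT : 0 < T) (hα : 0 < α) :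
    Tendsto (bridgeMinDensityPrimitive T α β) (𝓝[>] 0)
      (𝓝 (-((α + β) * exp (-2 * α * β / T) + (β - α)) / T)) := by
  have hx₀ : (0 : ℝ) * (T - 0) = 0 := by ring
  have hG := tendsto_gaussPrimitive_atTop (inv_pos.2 (mul_pos two_pos hT))
  have hU := hG.comp <|
    tendsto_bridgeRatio_atTop (p := α) (q := -β) hx₀ (by simpa using mul_pos hα hT)
  have hW := hG.comp <|
    tendsto_bridgeRatio_atTop (p := α) (q := β) hx₀ (by simpa using mul_pos hα hT)
  rw [← nhdsWithin_Ioo_eq_nhdsGT hT]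
  convert ((hU.const_mul ((α + β) * exp (-2 * α * β / T))).add (hW.const_mul (β - α))).const_mul
    (-(2 / (T * √(2 * π * T)))) using 2
  · rfl
  rw [div_inv_eq_mul, show π * (2 * T) = 2 * π * T by ring]
  have : 0 < √(2 * π * T) := by positivity
  field_simp

theorem tendsto_bridgeMinDensityPrimitive_nhdsLT {α β : ℝ} (hT : 0 < T) (hβ : 0 < β) :
    Tendsto (bridgeMinDensityPrimitive T α β) (𝓝[<] T)
      (𝓝 (-(-((α + β) * exp (-2 * α * β / T)) + (β - α)) / T)) := by
  have hx₀ : T * (T - T) = 0 := by ring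
  have hG := tendsto_gaussPrimitive_atTop (inv_pos.2 (mul_pos two_pos hT))
  have hG' := tendsto_gaussPrimitive_atBot (inv_pos.2 (mul_pos two_pos hT))
  have hU := hG'.comp <|
    tendsto_bridgeRatio_atBot (p := α) (q := -β) hx₀ (by simpa using mul_pos hβ hT)
  have hW := hG.comp <|
    tendsto_bridgeRatio_atTop (p := α) (q := β) hx₀ (by simpa using mul_pos hβ hT)
  rw [← nhdsWithin_Ioo_eq_nhdsLT hT]
  convert ((hU.const_mul ((α + β) * exp (-2 * α * β / T))).add (hW.const_mul (β - α))).const_mul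
    (-(2 / (T * √(2 * π * T)))) using 2
  · rfl
  rw [div_inv_eq_mul, show π * (2 * T) = 2 * π * T by ring]
  have : 0 < √(2 * π * T) := by positivity
  field_simp

theorem integral_bridgeMinDensity {α β : ℝ} (hT : 0 < T) (hα : 0 < α) (hβ : 0 < β) :
    ∫ θ in (0 : ℝ)..T, bridgeMinDensity T α β θ = 2 / T * (α + β) * exp (-2 * α * β / T) := by
  have hderiv := fun θ (hθ : θ ∈ Ioo 0 T) => hasDerivAt_bridgeMinDensityPrimitive α β hθ
  have h0 := tendsto_bridgeMinDensityPrimitive_nhdsGT_zero (β := β) hT hα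
  have hT' := tendsto_bridgeMinDensityPrimitive_nhdsLT (α := α) hT hβ
  have hint := intervalIntegrable_deriv_of_nonneg_of_tendsto hT hderiv
    (fun θ _ => bridgeMinDensity_nonneg hα.le hβ.le) h0 hT'
  rw [intervalIntegral.integral_eq_sub_of_hasDerivAt_of_tendsto hT hderiv hint h0 hT']
  ring

end bridgeMinDensity

/-- Integrating the joint density of the minimum of a Brownian bridge and its
location over the location θ ∈ (0,T) recovers the marginal density of the minimum. -/
theorem brownian_bridge_joint_min_density_marginalizes
    (T a b m : ℝ) (hT : 0 < T) (hma : m < a) (hmb : m < b) :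
    ∫ θ in (0 : ℝ)..T,
      (a - m) * (b - m) * Real.sqrt (2 * T) / Real.sqrt (π * θ ^ 3 * (T - θ) ^ 3) *
        Real.exp ((a - b) ^ 2 / (2 * T) - (a - m) ^ 2 / (2 * θ)
          - (b - m) ^ 2 / (2 * (T - θ))) =
    2 / T * (a + b - 2 * m) * Real.exp (-2 * (a - m) * (b - m) / T) := by
  rw [show a - b = (a - m) - (b - m) by ring, show a + b - 2 * m = (a - m) + (b - m) by ring]
  exact integral_bridgeMinDensity hT (sub_pos.2 hma) (sub_pos.2 hmb)
end
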